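/- Let R be an associative ring with identity and let a, b, c, d ∈ R satisfy (ac)² = (db)(ac), (db)² = (ac)(db), b(ac)a = b(db)a, and c(ac)d = c(db)d. Then ac has a g-Drazin inverse if and only if bd has a g-Drazin inverse; moreover, if e is a g-Drazin inverse of ac, then b·e²·d is a g-Drazin inverse of bd. -/
import Mathlib


/-- An element `q` of a ring is quasinilpotent if `1 + q * x` is a unit
for every `x` commuting with `q`. -/
def IsQuasinilpotent {R : Type*} [Ring R] (q : R) : Prop :=
  ∀ x : R, x * q = q * x → IsUnit (1 + q * x)

/-- `e` is a g-Drazin inverse of `a`. -/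
def IsGDrazinInverse {R : Type*} [Ring R] (a e : R) : Prop :=
  e = e * a * e ∧ (∀ y : R, y * a = a * y → e * y = y * e) ∧
    IsQuasinilpotent (a - a ^ 2 * e)

section Aux

variable {R : Type*} [Ring R]

private lemma unit_of_cube (m : R) (h : IsUnit (1 + m * (m * m))) : IsUnit (1 + m) := by
  obtain ⟨w, hw⟩ := h
  have hcm : Commute m (↑w : R) := by
    rw [hw]
    exact (Commute.one_right m).add_right ((Commute.refl m).mul_right ((Commute.refl m).mul_right (Commute.refl m)))
  have hcm' : Commute m (↑w⁻¹ : R) := hcm.units_inv_right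
  have key : (1 + m) * (1 - m + m * m) = 1 + m * (m * m) := by noncomm_ring
  have key2 : (1 - m + m * m) * (1 + m) = 1 + m * (m * m) := by noncomm_ring
  refine ⟨⟨1 + m, (1 - m + m * m) * ↑w⁻¹, ?_, ?_⟩, rfl⟩
  · calc (1 + m) * ((1 - m + m * m) * ↑w⁻¹)
        = ((1 + m) * (1 - m + m * m)) * ↑w⁻¹ := by noncomm_ring
      _ = ↑w * ↑w⁻¹ := by rw [key, hw]
      _ = 1 := w.mul_inv
  · have hc1 : (↑w⁻¹ : R) * (1 + m) = (1 + m) * ↑w⁻¹ :=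
      ((Commute.one_right (↑w⁻¹ : R)).add_right hcm'.symm).eq
    calc ((1 - m + m * m) * ↑w⁻¹) * (1 + m)
        = (1 - m + m * m) * (↑w⁻¹ * (1 + m)) := by noncomm_ring
      _ = (1 - m + m * m) * ((1 + m) * ↑w⁻¹) := by rw [hc1]
      _ = ((1 - m + m * m) * (1 + m)) * ↑w⁻¹ := by noncomm_ring
      _ = ↑w * ↑w⁻¹ := by rw [key2, hw]
      _ = 1 := w.mul_inv

private lemma unit_of_sq (m : R) (h : IsUnit (1 - m * m)) : IsUnit (1 + m) := by
  obtain ⟨w, hw⟩ := h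
  have hcm : Commute m (↑w : R) := by
    rw [hw]
    exact (Commute.one_right m).sub_right ((Commute.refl m).mul_right (Commute.refl m))
  have hcm' : Commute m (↑w⁻¹ : R) := hcm.units_inv_right
  have key : (1 + m) * (1 - m) = 1 - m * m := by noncomm_ring
  have key2 : (1 - m) * (1 + m) = 1 - m * m := by noncomm_ring
  refine ⟨⟨1 + m, (1 - m) * ↑w⁻¹, ?_, ?_⟩, rfl⟩
  · calc (1 + m) * ((1 - m) * ↑w⁻¹)
        = ((1 + m) * (1 - m)) * ↑w⁻¹ := by noncomm_ring
      _ = ↑w * ↑w⁻¹ := by rw [key, hw]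
      _ = 1 := w.mul_inv
  · have hc1 : (↑w⁻¹ : R) * (1 + m) = (1 + m) * ↑w⁻¹ :=
      ((Commute.one_right (↑w⁻¹ : R)).add_right hcm'.symm).eq
    calc ((1 - m) * ↑w⁻¹) * (1 + m)
        = (1 - m) * (↑w⁻¹ * (1 + m)) := by noncomm_ring
      _ = (1 - m) * ((1 + m) * ↑w⁻¹) := by rw [hc1]
      _ = ((1 - m) * (1 + m)) * ↑w⁻¹ := by noncomm_ring
      _ = ↑w * ↑w⁻¹ := by rw [key2, hw]
      _ = 1 := w.mul_inv

private lemma jacobson (x y : R) (h : IsUnit (1 + x * y)) : IsUnit (1 + y * x) := by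
  obtain ⟨w, hw⟩ := h
  have hwv : (1 + x * y) * ↑w⁻¹ = 1 := by rw [← hw]; exact w.mul_inv
  have hvw : (↑w⁻¹ : R) * (1 + x * y) = 1 := by rw [← hw]; exact w.inv_mul
  refine ⟨⟨1 + y * x, 1 - y * ↑w⁻¹ * x, ?_, ?_⟩, rfl⟩
  · calc (1 + y * x) * (1 - y * ↑w⁻¹ * x)
        = 1 + y * x - y * (((1 + x * y) * ↑w⁻¹) * x) := by noncomm_ring
      _ = 1 := by rw [hwv]; noncomm_ring
  · calc (1 - y * ↑w⁻¹ * x) * (1 + y * x)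
        = 1 + y * x - y * ((↑w⁻¹ * (1 + x * y)) * x) := by noncomm_ring
      _ = 1 := by rw [hvw]; noncomm_ring

private lemma qnil_swap (x y : R) (h : IsQuasinilpotent (x * y)) :
    IsQuasinilpotent (y * x) := by
  have key : ∀ t : R, t * (y * x) = (y * x) * t →
      IsUnit (1 + (y * x) * ((y * x) * t)) := by
    intro t ht
    have hw : (x * (t * y)) * (x * y) = (x * y) * (x * (t * y)) := by
      calc (x * (t * y)) * (x * y) = x * ((t * (y * x)) * y) := by noncomm_ring
        _ = x * (((y * x) * t) * y) := by rw [ht]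
        _ = (x * y) * (x * (t * y)) := by noncomm_ring
    have h1 : IsUnit (1 + (x * y) * (x * (t * y))) := h _ hw
    have h2 : IsUnit (1 + x * (y * (x * (t * y)))) := by
      have hr : 1 + (x * y) * (x * (t * y)) = 1 + x * (y * (x * (t * y))) := by noncomm_ring
      rwa [hr] at h1
    have h3 := jacobson _ _ h2
    have h4 : (y * (x * (t * y))) * x = (y * x) * ((y * x) * t) := by
      calc (y * (x * (t * y))) * x = (y * x) * (t * (y * x)) := by noncomm_ring
        _ = (y * x) * ((y * x) * t) := by rw [ht]
    rwa [h4] at h3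
  intro t ht
  have htt : (t * t) * (y * x) = (y * x) * (t * t) := by
    calc (t * t) * (y * x) = t * (t * (y * x)) := by noncomm_ring
      _ = t * ((y * x) * t) := by rw [ht]
      _ = (t * (y * x)) * t := by noncomm_ring
      _ = ((y * x) * t) * t := by rw [ht]
      _ = (y * x) * (t * t) := by noncomm_ring
  have ht2 : (-(t * t)) * (y * x) = (y * x) * (-(t * t)) := by
    rw [neg_mul, htt, mul_neg]
  have h5 := key _ ht2
  apply unit_of_sq ((y * x) * t)
  have hr : 1 - ((y * x) * t) * ((y * x) * t) = 1 + (y * x) * ((y * x) * (-(t * t))) := by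
    calc 1 - ((y * x) * t) * ((y * x) * t)
        = 1 - (y * x) * ((t * (y * x)) * t) := by noncomm_ring
      _ = 1 - (y * x) * (((y * x) * t) * t) := by rw [ht]
      _ = 1 + (y * x) * ((y * x) * (-(t * t))) := by noncomm_ring
  rw [hr]
  exact h5

private lemma qnil_pair (u v : R) (hvu : v * u = u * u) (hvv : v * v = u * v)
    (h : IsQuasinilpotent u) : IsQuasinilpotent v := by
  intro x hx
  have hs : (v * ((x * (x * x)) * u)) * u = u * (v * ((x * (x * x)) * u)) := by
    calc (v * ((x * (x * x)) * u)) * u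
        = v * ((x * (x * x)) * (u * u)) := by noncomm_ring
      _ = v * ((x * (x * x)) * (v * u)) := by rw [hvu]
      _ = v * ((x * (x * (x * v))) * u) := by noncomm_ring
      _ = v * ((x * (x * (v * x))) * u) := by rw [hx]
      _ = v * ((x * ((x * v) * x)) * u) := by noncomm_ring
      _ = v * ((x * ((v * x) * x)) * u) := by rw [hx]
      _ = v * (((x * v) * (x * x)) * u) := by noncomm_ring
      _ = v * (((v * x) * (x * x)) * u) := by rw [hx]
      _ = (v * v) * ((x * (x * x)) * u) := by noncomm_ring
      _ = (u * v) * ((x * (x * x)) * u) := by rw [hvv]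
      _ = u * (v * ((x * (x * x)) * u)) := by noncomm_ring
  have h1 : IsUnit (1 + u * (v * ((x * (x * x)) * u))) := h _ hs
  have h1' : IsUnit (1 + (u * (v * (x * (x * x)))) * u) := by
    have hr : 1 + u * (v * ((x * (x * x)) * u)) = 1 + (u * (v * (x * (x * x)))) * u := by
      noncomm_ring
    rwa [hr] at h1
  have h2 := jacobson _ _ h1'
  apply unit_of_cube (v * x)
  have key : (v * x) * ((v * x) * (v * x)) = u * (u * (v * (x * (x * x)))) := by
    calc (v * x) * ((v * x) * (v * x))
        = v * ((x * v) * (x * (v * x))) := by noncomm_ring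
      _ = v * ((v * x) * (x * (v * x))) := by rw [hx]
      _ = (v * v) * ((x * (x * v)) * x) := by noncomm_ring
      _ = (v * v) * ((x * (v * x)) * x) := by rw [hx]
      _ = (v * v) * ((x * v) * (x * x)) := by noncomm_ring
      _ = (v * v) * ((v * x) * (x * x)) := by rw [hx]
      _ = ((v * v) * v) * (x * (x * x)) := by noncomm_ring
      _ = ((u * v) * v) * (x * (x * x)) := by rw [hvv]
      _ = (u * (v * v)) * (x * (x * x)) := by noncomm_ring
      _ = (u * (u * v)) * (x * (x * x)) := by rw [hvv]
      _ = u * (u * (v * (x * (x * x)))) := by noncomm_ring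
  have hr : 1 + (v * x) * ((v * x) * (v * x)) = 1 + u * (u * (v * (x * (x * x)))) := by
    rw [key]
  rw [hr]
  exact h2

private lemma core (b d e u : R)
    (m3 : d * b * u = u * u)
    (m4 : d * b * (d * b) = u * (d * b))
    (m5 : u * (d * b * d) = u * (u * d))
    (m6 : b * (d * b * u) = b * (u * u))
    (he1 : e = e * u * e)
    (he2 : ∀ w : R, w * u = u * w → e * w = w * e)
    (he3 : IsQuasinilpotent (u - u * u * e)) :
    IsGDrazinInverse (b * d) (b * e ^ 2 * d) := by
  have eu : e * u = u * e := he2 u rfl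
  have ue2 : u * (e * e) = e := by
    calc u * (e * e) = (u * e) * e := by noncomm_ring
      _ = (e * u) * e := by rw [eu]
      _ = e := he1.symm
  have e2u : (e * e) * u = e := by
    calc (e * e) * u = e * (e * u) := by noncomm_ring
      _ = e * (u * e) := by rw [eu]
      _ = (e * u) * e := by noncomm_ring
      _ = e := he1.symm
  -- power lemmas
  have e3u : e ^ 3 * u = e ^ 2 := by
    calc e ^ 3 * u = e * ((e * e) * u) := by noncomm_ring
      _ = e * e := by rw [e2u]
      _ = e ^ 2 := by noncomm_ring
  have e4u : e ^ 4 * u = e ^ 3 := by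
    calc e ^ 4 * u = e ^ 2 * ((e * e) * u) := by noncomm_ring
      _ = e ^ 2 * e := by rw [e2u]
      _ = e ^ 3 := by noncomm_ring
  have e5u : e ^ 5 * u = e ^ 4 := by
    calc e ^ 5 * u = e ^ 3 * ((e * e) * u) := by noncomm_ring
      _ = e ^ 3 * e := by rw [e2u]
      _ = e ^ 4 := by noncomm_ring
  have e6u : e ^ 6 * u = e ^ 5 := by
    calc e ^ 6 * u = e ^ 4 * ((e * e) * u) := by noncomm_ring
      _ = e ^ 4 * e := by rw [e2u]
      _ = e ^ 5 := by noncomm_ring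
  have e4uu : e ^ 4 * (u * u) = e ^ 2 := by
    calc e ^ 4 * (u * u) = (e ^ 4 * u) * u := by noncomm_ring
      _ = e ^ 3 * u := by rw [e4u]
      _ = e ^ 2 := e3u
  have e5uu : e ^ 5 * (u * u) = e ^ 3 := by
    calc e ^ 5 * (u * u) = (e ^ 5 * u) * u := by noncomm_ring
      _ = e ^ 4 * u := by rw [e5u]
      _ = e ^ 3 := e4u
  have e6uu : e ^ 6 * (u * u) = e ^ 4 := by
    calc e ^ 6 * (u * u) = (e ^ 6 * u) * u := by noncomm_ring
      _ = e ^ 5 * u := by rw [e6u]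
      _ = e ^ 4 := e5u
  have ue5 : u * e ^ 5 = e ^ 4 := by
    calc u * e ^ 5 = (u * (e * e)) * e ^ 3 := by noncomm_ring
      _ = e * e ^ 3 := by rw [ue2]
      _ = e ^ 4 := by noncomm_ring
  have uue4 : u * (u * e ^ 4) = e ^ 2 := by
    calc u * (u * e ^ 4) = u * ((u * (e * e)) * (e * e)) := by noncomm_ring
      _ = u * (e * (e * e)) := by rw [ue2]
      _ = (u * (e * e)) * e := by noncomm_ring
      _ = e * e := by rw [ue2]
      _ = e ^ 2 := by noncomm_ring
  have ve : (d * b) * e = u * e := by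
    calc (d * b) * e = (d * b) * (u * (e * e)) := by rw [ue2]
      _ = ((d * b) * u) * (e * e) := by noncomm_ring
      _ = (u * u) * (e * e) := by rw [m3]
      _ = u * (u * (e * e)) := by noncomm_ring
      _ = u * e := by rw [ue2]
  have vee : (d * b) * (e * e) = e := by
    calc (d * b) * (e * e) = ((d * b) * e) * e := by noncomm_ring
      _ = (u * e) * e := by rw [ve]
      _ = u * (e * e) := by noncomm_ring
      _ = e := ue2
  refine ⟨?_, ?_, ?_⟩
  · -- f = f * B * f
    have g1 : (b * e ^ 2 * d) * (b * d) * (b * e ^ 2 * d) = b * e ^ 2 * d := by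
      calc (b * e ^ 2 * d) * (b * d) * (b * e ^ 2 * d)
          = b * ((e * e) * ((d * b) * ((d * b) * (e * e)))) * d := by noncomm_ring
        _ = b * ((e * e) * ((d * b) * e)) * d := by rw [vee]
        _ = b * ((e * e) * (u * e)) * d := by rw [ve]
        _ = b * (((e * e) * u) * e) * d := by noncomm_ring
        _ = b * ((e * e)) * d := by rw [e2u]
        _ = b * e ^ 2 * d := by noncomm_ring
    exact g1.symm
  · -- double commutant
    intro y hy
    have zv : (d * (y * b)) * (d * b) = (d * b) * (d * (y * b)) := by
      calc (d * (y * b)) * (d * b) = d * ((y * (b * d)) * b) := by noncomm_ring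
        _ = d * (((b * d) * y) * b) := by rw [hy]
        _ = (d * b) * (d * (y * b)) := by noncomm_ring
    have uvz : u * ((d * b) * (d * (y * b))) = u * (u * (d * (y * b))) := by
      calc u * ((d * b) * (d * (y * b))) = (u * (d * b * d)) * (y * b) := by noncomm_ring
        _ = (u * (u * d)) * (y * b) := by rw [m5]
        _ = u * (u * (d * (y * b))) := by noncomm_ring
    have su : ((d * b) * (d * (y * b)) * u) * u = u * ((d * b) * (d * (y * b)) * u) := by
      calc ((d * b) * (d * (y * b)) * u) * u
          = ((d * b) * (d * (y * b))) * (u * u) := by noncomm_ring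
        _ = ((d * b) * (d * (y * b))) * (d * b * u) := by rw [m3]
        _ = (d * b) * (((d * (y * b)) * (d * b)) * u) := by noncomm_ring
        _ = (d * b) * (((d * b) * (d * (y * b))) * u) := by rw [zv]
        _ = ((d * b) * (d * b)) * ((d * (y * b)) * u) := by noncomm_ring
        _ = (u * (d * b)) * ((d * (y * b)) * u) := by rw [m4]
        _ = u * ((d * b) * (d * (y * b)) * u) := by noncomm_ring
    have se : e * ((d * b) * (d * (y * b)) * u) = ((d * b) * (d * (y * b)) * u) * e :=
      he2 _ su
    have se5 : ((d * b) * (d * (y * b)) * u) * e ^ 5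
        = e ^ 5 * ((d * b) * (d * (y * b)) * u) := by
      have hc : Commute e ((d * b) * (d * (y * b)) * u) := se
      exact ((hc.pow_left 5).symm).eq
    have L1 : ∀ W : R, (b * (e ^ 4 * d)) * (y * W) = (b * (e ^ 5 * d)) * (y * ((b * d) * W)) := by
      intro W
      calc (b * (e ^ 4 * d)) * (y * W)
          = b * ((e ^ 6 * (u * u)) * (d * (y * W))) := by rw [e6uu]; noncomm_ring
        _ = b * ((e ^ 6 * (u * (d * b * d))) * (y * W)) := by rw [m5]; noncomm_ring
        _ = b * ((e ^ 6 * (u * d)) * (((b * d) * y) * W)) := by noncomm_ring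
        _ = b * ((e ^ 6 * (u * d)) * ((y * (b * d)) * W)) := by rw [hy]
        _ = (b * (e ^ 5 * d)) * (y * ((b * d) * W)) := by rw [← e6u]; noncomm_ring
    have hBom : (b * d) * (b * ((d * b) * d)) = (b * d) * (b * (u * d)) := by
      calc (b * d) * (b * ((d * b) * d)) = b * ((d * b * (d * b)) * d) := by noncomm_ring
        _ = b * ((u * (d * b)) * d) := by rw [m4]
        _ = b * (u * (d * b * d)) := by noncomm_ring
        _ = b * (u * (u * d)) := by rw [m5]
        _ = b * ((d * b * u) * d) := by rw [m3]; noncomm_ring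
        _ = (b * d) * (b * (u * d)) := by noncomm_ring
    have hfy : (b * e ^ 2 * d) * y = b * (e ^ 3 * (d * (y * b))) * d := by
      calc (b * e ^ 2 * d) * y
          = b * ((e ^ 4 * (u * u)) * d) * y := by rw [e4uu]; noncomm_ring
        _ = b * (e ^ 4 * (u * (d * b * d))) * y := by rw [m5]; noncomm_ring
        _ = (b * (e ^ 4 * (u * d))) * ((b * d) * y) := by noncomm_ring
        _ = (b * (e ^ 4 * (u * d))) * (y * (b * d)) := by rw [hy]
        _ = b * ((e ^ 4 * u) * (d * (y * b))) * d := by noncomm_ring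
        _ = b * (e ^ 3 * (d * (y * b))) * d := by rw [e4u]
    have hyf : y * (b * e ^ 2 * d) = b * (e ^ 3 * (d * (y * b))) * d := by
      calc y * (b * e ^ 2 * d)
          = y * (b * (u * (u * e ^ 4)) * d) := by rw [uue4]
        _ = y * ((b * (d * b * u)) * (e ^ 4 * d)) := by rw [m6]; noncomm_ring
        _ = ((y * (b * d)) * b) * (u * (e ^ 4 * d)) := by noncomm_ring
        _ = (((b * d) * y) * b) * (u * (e ^ 4 * d)) := by rw [hy]
        _ = b * (((d * (y * b)) * u) * (e ^ 4 * d)) := by noncomm_ring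
        _ = b * (((d * (y * b)) * u) * ((u * e ^ 5) * d)) := by rw [ue5]
        _ = b * (((d * (y * b)) * (u * u)) * (e ^ 5 * d)) := by noncomm_ring
        _ = b * (((d * (y * b)) * (d * b * u)) * (e ^ 5 * d)) := by rw [m3]
        _ = b * ((((d * (y * b)) * (d * b)) * u) * (e ^ 5 * d)) := by noncomm_ring
        _ = b * ((((d * b) * (d * (y * b))) * u) * (e ^ 5 * d)) := by rw [zv]
        _ = b * (((d * b) * (d * (y * b)) * u) * e ^ 5) * d := by noncomm_ring
        _ = b * (e ^ 5 * ((d * b) * (d * (y * b)) * u)) * d := by rw [se5]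
        _ = b * ((e ^ 6 * u) * ((d * b) * (d * (y * b)) * u)) * d := by rw [e6u]
        _ = b * ((e ^ 6 * (u * ((d * b) * (d * (y * b))))) * u) * d := by noncomm_ring
        _ = b * ((e ^ 6 * (u * (u * (d * (y * b))))) * u) * d := by rw [uvz]
        _ = b * ((e ^ 6 * (u * u)) * ((d * (y * b)) * u)) * d := by noncomm_ring
        _ = b * (e ^ 4 * ((d * (y * b)) * u)) * d := by rw [e6uu]
        _ = (b * (e ^ 4 * d)) * (y * (b * (u * d))) := by noncomm_ring
        _ = (b * (e ^ 5 * d)) * (y * ((b * d) * (b * (u * d)))) := L1 (b * (u * d))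
        _ = (b * (e ^ 5 * d)) * (y * ((b * d) * (b * ((d * b) * d)))) := by rw [hBom]
        _ = (b * (e ^ 4 * d)) * (y * (b * ((d * b) * d))) := (L1 (b * ((d * b) * d))).symm
        _ = b * ((e ^ 4 * ((d * (y * b)) * (d * b))) * d) := by noncomm_ring
        _ = b * ((e ^ 4 * ((d * b) * (d * (y * b)))) * d) := by rw [zv]
        _ = b * (((e ^ 5 * u) * ((d * b) * (d * (y * b)))) * d) := by rw [e5u]
        _ = b * ((e ^ 5 * (u * ((d * b) * (d * (y * b))))) * d) := by noncomm_ring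
        _ = b * ((e ^ 5 * (u * (u * (d * (y * b))))) * d) := by rw [uvz]
        _ = b * (e ^ 3 * (d * (y * b))) * d := by rw [← e5uu]; noncomm_ring
    rw [hfy, hyf]
  · -- quasinilpotent part
    have hq2 : (b * d) - (b * d) ^ 2 * (b * e ^ 2 * d) = b * ((1 - u * e) * d) := by
      have hB2f : (b * d) ^ 2 * (b * e ^ 2 * d) = b * ((u * e) * d) := by
        calc (b * d) ^ 2 * (b * e ^ 2 * d)
            = b * ((d * b) * ((d * b) * (e * e))) * d := by noncomm_ring
          _ = b * ((d * b) * e) * d := by rw [vee]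
          _ = b * ((u * e)) * d := by rw [ve]
          _ = b * ((u * e) * d) := by noncomm_ring
      rw [hB2f]; noncomm_ring
    rw [hq2]
    have hpu : (1 - u * e) * u = u * (1 - u * e) := by
      calc (1 - u * e) * u = u - u * (e * u) := by noncomm_ring
        _ = u - u * (u * e) := by rw [eu]
        _ = u * (1 - u * e) := by noncomm_ring
    have hpp : (1 - u * e) * (1 - u * e) = 1 - u * e := by
      have hh : (u * e) * (u * e) = u * e := by
        calc (u * e) * (u * e) = u * ((e * u) * e) := by noncomm_ring
          _ = u * ((u * e) * e) := by rw [eu]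
          _ = u * (u * (e * e)) := by noncomm_ring
          _ = u * e := by rw [ue2]
      calc (1 - u * e) * (1 - u * e) = 1 - u * e - u * e + (u * e) * (u * e) := by noncomm_ring
        _ = 1 - u * e - u * e + u * e := by rw [hh]
        _ = 1 - u * e := by noncomm_ring
    have hvpv : (d * b) * ((1 - u * e) * (d * b)) = u * ((1 - u * e) * (d * b)) := by
      calc (d * b) * ((1 - u * e) * (d * b))
          = (d * b) * (d * b) - ((d * b) * u) * (e * (d * b)) := by noncomm_ring
        _ = u * (d * b) - (u * u) * (e * (d * b)) := by rw [m4, m3]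
        _ = u * ((1 - u * e) * (d * b)) := by noncomm_ring
    have lhs1 : ((d * b) * (1 - u * e)) * (u - u * u * e) = (u * u) * (1 - u * e) := by
      calc ((d * b) * (1 - u * e)) * (u - u * u * e)
          = (d * b) * (((1 - u * e) * u) * (1 - u * e)) := by noncomm_ring
        _ = (d * b) * ((u * (1 - u * e)) * (1 - u * e)) := by rw [hpu]
        _ = ((d * b) * u) * ((1 - u * e) * (1 - u * e)) := by noncomm_ring
        _ = ((d * b) * u) * (1 - u * e) := by rw [hpp]
        _ = (u * u) * (1 - u * e) := by rw [m3]
    have rhs1 : (u - u * u * e) * (u - u * u * e) = (u * u) * (1 - u * e) := by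
      calc (u - u * u * e) * (u - u * u * e)
          = u * (((1 - u * e) * u) * (1 - u * e)) := by noncomm_ring
        _ = u * ((u * (1 - u * e)) * (1 - u * e)) := by rw [hpu]
        _ = (u * u) * ((1 - u * e) * (1 - u * e)) := by noncomm_ring
        _ = (u * u) * (1 - u * e) := by rw [hpp]
    have hpsitheta : ((d * b) * (1 - u * e)) * (u - u * u * e)
        = (u - u * u * e) * (u - u * u * e) := by rw [lhs1, rhs1]
    have hpsipsi : ((d * b) * (1 - u * e)) * ((d * b) * (1 - u * e))
        = (u - u * u * e) * ((d * b) * (1 - u * e)) := by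
      calc ((d * b) * (1 - u * e)) * ((d * b) * (1 - u * e))
          = ((d * b) * ((1 - u * e) * (d * b))) * (1 - u * e) := by noncomm_ring
        _ = (u * ((1 - u * e) * (d * b))) * (1 - u * e) := by rw [hvpv]
        _ = (u - u * u * e) * ((d * b) * (1 - u * e)) := by noncomm_ring
    have hpsi : IsQuasinilpotent ((d * b) * (1 - u * e)) :=
      qnil_pair (u - u * u * e) ((d * b) * (1 - u * e)) hpsitheta hpsipsi he3
    have hpsi' : IsQuasinilpotent (d * (b * (1 - u * e))) := by
      have hr : d * (b * (1 - u * e)) = (d * b) * (1 - u * e) := by noncomm_ring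
      rw [hr]; exact hpsi
    have hfin := qnil_swap d (b * (1 - u * e)) hpsi'
    have hr2 : b * ((1 - u * e) * d) = (b * (1 - u * e)) * d := by noncomm_ring
    rw [hr2]; exact hfin

private lemma main (a b c d e : R)
    (h1 : (a * c) ^ 2 = (d * b) * (a * c))
    (h2 : (d * b) ^ 2 = (a * c) * (d * b))
    (h3 : b * (a * c) * a = b * (d * b) * a)
    (h4 : c * (a * c) * d = c * (d * b) * d)
    (he : IsGDrazinInverse (a * c) e) :
    IsGDrazinInverse (b * d) (b * e ^ 2 * d) := by
  obtain ⟨he1, he2, he3⟩ := he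
  have m3 : d * b * (a * c) = (a * c) * (a * c) := by rw [← h1]; noncomm_ring
  have m4 : d * b * (d * b) = (a * c) * (d * b) := by rw [← h2]; noncomm_ring
  have m5 : (a * c) * (d * b * d) = (a * c) * ((a * c) * d) := by
    calc (a * c) * (d * b * d) = a * (c * (d * b) * d) := by noncomm_ring
      _ = a * (c * (a * c) * d) := by rw [h4]
      _ = (a * c) * ((a * c) * d) := by noncomm_ring
  have m6 : b * (d * b * (a * c)) = b * ((a * c) * (a * c)) := by
    calc b * (d * b * (a * c)) = (b * (d * b) * a) * c := by noncomm_ring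
      _ = (b * (a * c) * a) * c := by rw [h3]
      _ = b * ((a * c) * (a * c)) := by noncomm_ring
  have he3' : IsQuasinilpotent ((a * c) - (a * c) * (a * c) * e) := by
    have hr : (a * c) - (a * c) * (a * c) * e = (a * c) - (a * c) ^ 2 * e := by noncomm_ring
    rw [hr]; exact he3
  exact core b d e (a * c) m3 m4 m5 m6 he1 he2 he3'

end Aux

theorem stmt_1 {R : Type*} [Ring R] (a b c d : R)
    (h1 : (a * c) ^ 2 = (d * b) * (a * c))
    (h2 : (d * b) ^ 2 = (a * c) * (d * b))
    (h3 : b * (a * c) * a = b * (d * b) * a)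
    (h4 : c * (a * c) * d = c * (d * b) * d) :
    ((∃ e, IsGDrazinInverse (a * c) e) ↔ (∃ f, IsGDrazinInverse (b * d) f)) ∧
    (∀ e, IsGDrazinInverse (a * c) e →
      IsGDrazinInverse (b * d) (b * e ^ 2 * d)) := by
  constructor
  · constructor
    · rintro ⟨e, he⟩
      exact ⟨_, main a b c d e h1 h2 h3 h4 he⟩
    · rintro ⟨g, hg⟩
      have step1 : IsGDrazinInverse (d * b) (d * g ^ 2 * b) :=
        main b d d b g (by rw [pow_two]) (by rw [pow_two]) rfl rfl hg
      have step2 : IsGDrazinInverse (c * a) (c * (d * g ^ 2 * b) ^ 2 * a) :=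
        main d c b a (d * g ^ 2 * b) h2 h1 h4.symm h3.symm step1
      have step3 : IsGDrazinInverse (a * c) (a * (c * (d * g ^ 2 * b) ^ 2 * a) ^ 2 * c) :=
        main c a a c (c * (d * g ^ 2 * b) ^ 2 * a) (by rw [pow_two]) (by rw [pow_two]) rfl rfl step2
      exact ⟨_, step3⟩
  · intro e he
    exact main a b c d e h1 h2 h3 h4 he
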